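/- For the metric g = 2·(y·log y)/(x·log x)·dx² - (dx⊗dy + dy⊗dx) on M = {(x,y) : x³ < y < x², 0 < x < 1/2}, the curve γ(s) = (s, s³ + s⁴) for s ∈ (0,1/2) is timelike: g(γ'(s), γ'(s)) = -2s³ + 2s²(1+s)·log(1+s)/log(s) < 0 for all s ∈ (0, 1/2). -/

import Mathlib

open Matrix

noncomputable section

/-- The metric of Example 3.6 as a matrix in the coordinates `(x,y)`. -/
def gEx (x y : ℝ) : Matrix (Fin 2) (Fin 2) ℝ :=
  !![2 * (y * Real.log y) / (x * Real.log x), -1; -1, 0]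

lemma gEx_quadratic_form (x y a b : ℝ) :
    ![a, b] ⬝ᵥ (gEx x y).mulVec ![a, b]
      = 2 * (y * Real.log y) / (x * Real.log x) * a ^ 2 - 2 * a * b := by
  simp only [gEx, mulVec, dotProduct, Fin.sum_univ_two, cons_val_zero, cons_val_one,
    cons_val', empty_val', cons_val_fin_one, of_apply]
  ring

lemma log_cube_add_pow_four {s : ℝ} (hs : 0 < s) :
    Real.log (s ^ 3 + s ^ 4) = 3 * Real.log s + Real.log (1 + s) := by
  rw [show s ^ 3 + s ^ 4 = s ^ 3 * (1 + s) by ring,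
    Real.log_mul (by positivity) (by positivity), Real.log_pow]
  norm_num

lemma log_one_add_div_log_neg {s : ℝ} (hs : 0 < s) (hs1 : s < 1) :
    Real.log (1 + s) / Real.log s < 0 :=
  div_neg_of_pos_of_neg (Real.log_pos (by linarith)) (Real.log_neg hs hs1)

/-- Example 3.6: the curve `γ(s) = (s, s³ + s⁴)` is timelike. -/
theorem stmt9 :
    ∀ s : ℝ, 0 < s → s < 1/2 →
      (![1, 3*s^2 + 4*s^3] ⬝ᵥ (gEx s (s^3 + s^4)).mulVec ![1, 3*s^2 + 4*s^3])
        = -2*s^3 + 2*s^2*(1+s) * Real.log (1+s) / Real.log s ∧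
      -2*s^3 + 2*s^2*(1+s) * Real.log (1+s) / Real.log s < 0 := by
  intro s hs hs2
  have hlog : Real.log s ≠ 0 := (Real.log_neg hs (by linarith)).ne
  constructor
  · rw [gEx_quadratic_form, log_cube_add_pow_four hs]
    field_simp
    ring
  · have hratio := log_one_add_div_log_neg hs (by linarith)
    have hcoef : 0 < 2 * s ^ 2 * (1 + s) := by positivity
    rw [mul_div_assoc]
    linarith [mul_neg_of_pos_of_neg hcoef hratio, pow_pos hs 3]
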